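/- Let ℓ be a learning function with ℓ̲ = ℓ'(1), ℓ̄ = ℓ'(0) and L_Γ = ℓ̄ + 2ℓ̄³/ℓ̲, let V > 0, θ > 0, and fix q in the simplex Δ^{K−1}. Define the reduced-form output Y(x) = V·C(x,q)/(1 + θ·Γ(x⊙(1−x))) for x ∈ Δ^{K−1}, where Γ(z) = ‖z‖₁·λ(z/‖z‖₁) for z ≠ 0, Γ(0) = 0, and x⊙(1−x) has coordinates x_k(1−x_k). If θ < 1/(2L_Γ), then Y(x) ≤ Y(q) for every x ∈ Δ^{K−1}, with strict inequality whenever x ≠ q; that is, x = q is the unique maximizer of Y over Δ^{K−1}. -/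

import Mathlib

open Finset

noncomputable section

/-- The simplex Δ^{K-1}: nonnegative coordinates summing to 1. -/
def simplex (K : ℕ) : Set (Fin K → ℝ) :=
  {π | (∀ k, 0 ≤ π k) ∧ ∑ k, π k = 1}

/-- ℓ¹-norm on ℝ^K. -/
def l1 {K : ℕ} (a : Fin K → ℝ) : ℝ := ∑ k, |a k|

/-- Coverage operator C(a,b) = ∑ min(a_k, b_k). -/
def Cov {K : ℕ} (a b : Fin K → ℝ) : ℝ := ∑ k, min (a k) (b k)

/-- A learning function ℓ : [0,∞) → [0,∞): continuous, strictly increasing,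
strictly concave, ℓ(0)=0, ℓ(1)=1, continuously differentiable on [0,1]
with derivative `deriv`, ℓ'(1) > 0 (finiteness of ℓ'(0) is automatic). -/
structure LearningFunction where
  toFun : ℝ → ℝ
  deriv : ℝ → ℝ
  continuousOn : ContinuousOn toFun (Set.Ici 0)
  strictMonoOn : StrictMonoOn toFun (Set.Ici 0)
  strictConcaveOn : StrictConcaveOn ℝ (Set.Ici 0) toFun
  nonneg : ∀ s, 0 ≤ s → 0 ≤ toFun s
  map_zero : toFun 0 = 0
  map_one : toFun 1 = 1
  hasDerivAt : ∀ s ∈ Set.Icc (0:ℝ) 1,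
    HasDerivWithinAt toFun (deriv s) (Set.Icc (0:ℝ) 1) s
  derivContinuousOn : ContinuousOn deriv (Set.Icc (0:ℝ) 1)
  deriv_one_pos : 0 < deriv 1

/-- Maximal feasible scale H(π) = sup { H ≥ 0 : ∑ ℓ(H π_k) ≤ 1 }. -/
def Hscale {K : ℕ} (L : LearningFunction) (π : Fin K → ℝ) : ℝ :=
  sSup {H : ℝ | 0 ≤ H ∧ ∑ k, L.toFun (H * π k) ≤ 1}

/-- Relative inefficiency index λ(π) = 1/H(π). -/
def lam {K : ℕ} (L : LearningFunction) (π : Fin K → ℝ) : ℝ :=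
  1 / Hscale L π

/-- Γ(z) = ‖z‖₁ λ(z/‖z‖₁) for z ≠ 0, Γ(0) = 0. -/
def Gam {K : ℕ} (L : LearningFunction) (z : Fin K → ℝ) : ℝ :=
  if z = 0 then 0 else l1 z * lam L (fun k => z k / l1 z)

/-- Fragmentation index D(π) = 1 - ∑ π_k². -/
def Dfrag {K : ℕ} (π : Fin K → ℝ) : ℝ := 1 - ∑ k, (π k) ^ 2

/-- Lipschitz constant L_Γ = ℓ̄ + 2 ℓ̄³/ℓ̲. -/
def LGam (L : LearningFunction) : ℝ := L.deriv 0 + 2 * L.deriv 0 ^ 3 / L.deriv 1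



/-! On the simplex `C(x, q) = 1 - ‖x - q‖₁ / 2`, `C(q, q) = 1`, and `x ↦ x ⊙ (1 - x)` is
1-Lipschitz for `‖·‖₁`. The heart of the matter is that `Γ = 1 / H` is `L_Γ`-Lipschitz for `‖·‖₁` on
the nonnegative orthant. As `Γ` is monotone it suffices to bound `Γ (z + δ)` for `δ ≥ 0`. If
`ℓ̄ ‖δ‖₁ ≤ ℓ̲ ε ‖z‖₁` with `ε ≤ 1/2`, shrinking a feasible scale of `z` by the factor `1 - ε`
keeps it feasible for `z + δ`: the slopes of `ℓ` on `[0, 1]` are at least `ℓ̲`, so shrinking saves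
`ℓ̲ ε ‖z‖₁`, while adding `δ` costs at most `ℓ̄ ‖δ‖₁`. Hence `Γ (z + δ) ≤ Γ z / (1 - ε)`. For
larger `δ` the bounds `‖z‖₁ ≤ Γ z ≤ ℓ̄ ‖z‖₁` suffice. Cross-multiplying, the claim follows from
`1 + θ Γ(x ⊙ (1 - x)) - C(x, q) (1 + θ Γ(q ⊙ (1 - q))) ≥ (1 - 2 θ L_Γ) ‖x - q‖₁ / 2`. -/

namespace LearningFunction

variable (L : LearningFunction)

lemma concaveOn : ConcaveOn ℝ (Set.Ici 0) L.toFun := L.strictConcaveOn.concaveOn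

lemma hasDerivWithinAt_Ioi_zero : HasDerivWithinAt L.toFun (L.deriv 0) (Set.Ioi 0) 0 :=
  (L.hasDerivAt 0 ⟨le_rfl, zero_le_one⟩).mono_of_mem_nhdsWithin (Icc_mem_nhdsGT one_pos)

lemma apply_add_le {c d : ℝ} (hc : 0 ≤ c) (hd : 0 ≤ d) :
    L.toFun (c + d) ≤ L.toFun c + L.deriv 0 * d := by
  rcases hd.eq_or_lt with rfl | hd
  · simp
  have hcd : 0 < c + d := by linarith
  have h₁ : slope L.toFun c (c + d) ≤ slope L.toFun 0 (c + d) := by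
    rw [slope_comm, slope_comm _ 0]
    exact L.concaveOn.slope_anti hcd.le ⟨Set.self_mem_Ici, by simpa using hcd.ne⟩
      ⟨hc, by simpa using hd.ne'⟩ hc
  have h₂ : slope L.toFun 0 (c + d) ≤ L.deriv 0 :=
    L.concaveOn.slope_le_of_hasDerivWithinAt_Ioi Set.self_mem_Ici hcd.le hcd
      L.hasDerivWithinAt_Ioi_zero
  have h := h₁.trans h₂
  rw [slope_def_field, add_sub_cancel_left, div_le_iff₀ hd] at h
  linarith

lemma apply_le {s : ℝ} (hs : 0 ≤ s) : L.toFun s ≤ L.deriv 0 * s := by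
  simpa [L.map_zero] using L.apply_add_le le_rfl hs

lemma one_le_deriv_zero : 1 ≤ L.deriv 0 := by
  simpa [L.map_one] using L.apply_le zero_le_one

lemma deriv_zero_pos : 0 < L.deriv 0 := one_pos.trans_le L.one_le_deriv_zero

lemma self_le_apply {s : ℝ} (hs₀ : 0 ≤ s) (hs₁ : s ≤ 1) : s ≤ L.toFun s := by
  simpa [L.map_zero, L.map_one] using
    L.concaveOn.2 (Set.mem_Ici.2 zero_le_one) Set.self_mem_Ici hs₀ (sub_nonneg.2 hs₁)
      (add_sub_cancel s 1)

lemma le_one_of_apply_le_one {t : ℝ} (ht : 0 ≤ t) (h : L.toFun t ≤ 1) : t ≤ 1 := by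
  rwa [← L.map_one, L.strictMonoOn.le_iff_le ht (Set.mem_Ici.2 zero_le_one)] at h

lemma deriv_one_mul_le_sub {s t : ℝ} (hs : 0 ≤ s) (hst : s ≤ t) (ht : t ≤ 1) :
    L.deriv 1 * (t - s) ≤ L.toFun t - L.toFun s := by
  rcases hst.eq_or_lt with rfl | hst
  · simp
  have hIcc : ConcaveOn ℝ (Set.Icc 0 1) L.toFun :=
    L.concaveOn.subset Set.Icc_subset_Ici_self (convex_Icc 0 1)
  have h₁ : L.deriv 1 ≤ slope L.toFun s 1 :=
    hIcc.le_slope_of_hasDerivWithinAt ⟨hs, by linarith⟩ ⟨zero_le_one, le_rfl⟩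
      (hst.trans_le ht) (L.hasDerivAt 1 ⟨zero_le_one, le_rfl⟩)
  have h₂ : slope L.toFun s 1 ≤ slope L.toFun s t :=
    hIcc.antitoneOn_slope_gt ⟨hs, by linarith⟩ ⟨⟨by linarith, ht⟩, hst⟩
      ⟨⟨zero_le_one, le_rfl⟩, hst.trans_le ht⟩ ht
  have h := h₁.trans h₂
  rwa [slope_def_field, le_div_iff₀ (sub_pos.2 hst)] at h

lemma apply_one_sub_mul_add_le {a b ε : ℝ} (ha₀ : 0 ≤ a) (ha₁ : a ≤ 1) (hb : 0 ≤ b)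
    (hε₀ : 0 ≤ ε) (hε₁ : ε ≤ 1) :
    L.toFun ((1 - ε) * (a + b)) ≤ L.toFun a - L.deriv 1 * ε * a + L.deriv 0 * b := by
  have hε : 0 ≤ 1 - ε := sub_nonneg.2 hε₁
  have hshrink := L.deriv_one_mul_le_sub (mul_nonneg hε ha₀)
    (mul_le_of_le_one_left ha₀ (by linarith)) ha₁
  have hgrow := L.apply_add_le (mul_nonneg hε ha₀) (mul_nonneg hε hb)
  have hb' : L.deriv 0 * ((1 - ε) * b) ≤ L.deriv 0 * b :=
    mul_le_mul_of_nonneg_left (mul_le_of_le_one_left hb (by linarith)) L.deriv_zero_pos.le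
  rw [mul_add]
  linarith

end LearningFunction

def feasibleScales {K : ℕ} (L : LearningFunction) (z : Fin K → ℝ) : Set ℝ :=
  {H | 0 ≤ H ∧ ∑ k, L.toFun (H * z k) ≤ 1}

section Gam

open scoped Pointwise

variable {K : ℕ} (L : LearningFunction) {z w δ : Fin K → ℝ}

lemma Hscale_eq_sSup_feasibleScales (z : Fin K → ℝ) :
    Hscale L z = sSup (feasibleScales L z) := rfl

lemma zero_mem_feasibleScales (z : Fin K → ℝ) : (0 : ℝ) ∈ feasibleScales L z :=
  ⟨le_rfl, by simp [L.map_zero]⟩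

lemma Hscale_nonneg (z : Fin K → ℝ) : 0 ≤ Hscale L z :=
  Real.sSup_nonneg fun _ hH => hH.1

lemma mul_le_one_of_mem_feasibleScales (hz : ∀ k, 0 ≤ z k) {H : ℝ}
    (hH : H ∈ feasibleScales L z) (k : Fin K) : H * z k ≤ 1 :=
  L.le_one_of_apply_le_one (mul_nonneg hH.1 (hz k)) <|
    (single_le_sum (fun j _ => L.nonneg _ (mul_nonneg hH.1 (hz j))) (mem_univ k)).trans hH.2

lemma mul_sum_le_one_of_mem_feasibleScales (hz : ∀ k, 0 ≤ z k) {H : ℝ}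
    (hH : H ∈ feasibleScales L z) : H * ∑ k, z k ≤ 1 :=
  calc H * ∑ k, z k = ∑ k, H * z k := mul_sum _ _ _
    _ ≤ ∑ k, L.toFun (H * z k) := sum_le_sum fun k _ =>
        L.self_le_apply (mul_nonneg hH.1 (hz k)) (mul_le_one_of_mem_feasibleScales L hz hH k)
    _ ≤ 1 := hH.2

lemma bddAbove_feasibleScales (hz : ∀ k, 0 ≤ z k) (hn : 0 < ∑ k, z k) :
    BddAbove (feasibleScales L z) :=
  ⟨(∑ k, z k)⁻¹, fun _ hH => by
    rw [← one_div, le_div_iff₀ hn]; exact mul_sum_le_one_of_mem_feasibleScales L hz hH⟩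

lemma inv_mem_feasibleScales (hz : ∀ k, 0 ≤ z k) (hn : 0 < ∑ k, z k) :
    (L.deriv 0 * ∑ k, z k)⁻¹ ∈ feasibleScales L z := by
  have hc : 0 < L.deriv 0 * ∑ k, z k := mul_pos L.deriv_zero_pos hn
  refine ⟨(inv_pos.2 hc).le, ?_⟩
  calc ∑ k, L.toFun ((L.deriv 0 * ∑ j, z j)⁻¹ * z k)
      ≤ ∑ k, L.deriv 0 * ((L.deriv 0 * ∑ j, z j)⁻¹ * z k) :=
        sum_le_sum fun k _ => L.apply_le (mul_nonneg (inv_pos.2 hc).le (hz k))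
    _ = 1 := by
        rw [← mul_sum, ← mul_sum]
        field_simp [L.deriv_zero_pos.ne']

lemma Hscale_pos (hz : ∀ k, 0 ≤ z k) (hn : 0 < ∑ k, z k) : 0 < Hscale L z :=
  (inv_pos.2 (mul_pos L.deriv_zero_pos hn)).trans_le
    (le_csSup (bddAbove_feasibleScales L hz hn) (inv_mem_feasibleScales L hz hn))

lemma Hscale_div_const (z : Fin K → ℝ) {c : ℝ} (hc : 0 < c) :
    Hscale L (fun k => z k / c) = c * Hscale L z := by
  have hscaled : feasibleScales L (fun k => z k / c) = c • feasibleScales L z := by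
    ext H
    rw [Set.mem_smul_set_iff_inv_smul_mem₀ hc.ne', smul_eq_mul]
    simp only [feasibleScales, Set.mem_ofPred_eq, mul_nonneg_iff_of_pos_left (inv_pos.2 hc),
      div_eq_inv_mul, mul_left_comm H, mul_assoc]
  rw [Hscale_eq_sSup_feasibleScales, hscaled, Real.sSup_smul_of_nonneg hc.le, smul_eq_mul,
    Hscale_eq_sSup_feasibleScales]

lemma Gam_eq_inv_Hscale (z : Fin K → ℝ) : Gam L z = (Hscale L z)⁻¹ := by
  by_cases hz : z = 0
  · -- every `H ≥ 0` is feasible, and `sSup` of the unbounded set `Ici 0` is `0` in `ℝ`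
    have hfeas : feasibleScales L z = Set.Ici 0 := by
      ext H
      simp [feasibleScales, hz, L.map_zero]
    rw [Gam, if_pos hz, Hscale_eq_sSup_feasibleScales, hfeas,
      Real.sSup_of_not_bddAbove (not_bddAbove_Ici 0), inv_zero]
  · obtain ⟨k, hk⟩ := Function.ne_iff.1 hz
    have hl1 : 0 < l1 z := sum_pos' (fun j _ => abs_nonneg (z j)) ⟨k, mem_univ k, abs_pos.2 hk⟩
    rw [Gam, if_neg hz, lam, Hscale_div_const L z hl1, one_div, mul_inv,
      mul_inv_cancel_left₀ hl1.ne']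

lemma Gam_nonneg (z : Fin K → ℝ) : 0 ≤ Gam L z := by
  rw [Gam_eq_inv_Hscale]
  exact inv_nonneg.2 (Hscale_nonneg L z)

lemma Gam_zero : Gam L (0 : Fin K → ℝ) = 0 := if_pos rfl

lemma eq_zero_of_sum_eq_zero (hz : ∀ k, 0 ≤ z k) (h : ∑ k, z k = 0) : z = 0 :=
  funext fun k => (sum_eq_zero_iff_of_nonneg fun j _ => hz j).1 h k (mem_univ k)

lemma Gam_le_deriv_zero_mul_sum (hz : ∀ k, 0 ≤ z k) : Gam L z ≤ L.deriv 0 * ∑ k, z k := by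
  rcases (sum_nonneg fun k _ => hz k).eq_or_lt with h | h
  · rw [← h, eq_zero_of_sum_eq_zero hz h.symm, Gam_zero, mul_zero]
  · rw [Gam_eq_inv_Hscale, ← inv_inv (L.deriv 0 * _)]
    exact inv_anti₀ (inv_pos.2 (mul_pos L.deriv_zero_pos h))
      (le_csSup (bddAbove_feasibleScales L hz h) (inv_mem_feasibleScales L hz h))

lemma sum_le_Gam (hz : ∀ k, 0 ≤ z k) : ∑ k, z k ≤ Gam L z := by
  rcases (sum_nonneg fun k _ => hz k).eq_or_lt with h | h
  · exact h ▸ Gam_nonneg L z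
  · rw [Gam_eq_inv_Hscale, ← inv_inv (∑ k, z k)]
    refine inv_anti₀ (Hscale_pos L hz h)
      (csSup_le ⟨0, zero_mem_feasibleScales L z⟩ fun H hH => ?_)
    rw [← one_div, le_div_iff₀ h]
    exact mul_sum_le_one_of_mem_feasibleScales L hz hH

lemma Gam_mono (hz : ∀ k, 0 ≤ z k) (hzw : ∀ k, z k ≤ w k) : Gam L z ≤ Gam L w := by
  have hw : ∀ k, 0 ≤ w k := fun k => (hz k).trans (hzw k)
  rcases (sum_nonneg fun k _ => hz k).eq_or_lt with h | h
  · rw [eq_zero_of_sum_eq_zero hz h.symm, Gam_zero]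
    exact Gam_nonneg L w
  have hsub : feasibleScales L w ⊆ feasibleScales L z := fun H hH =>
    ⟨hH.1, (sum_le_sum fun k _ => L.strictMonoOn.monotoneOn (mul_nonneg hH.1 (hz k))
      (mul_nonneg hH.1 (hw k)) (mul_le_mul_of_nonneg_left (hzw k) hH.1)).trans hH.2⟩
  rw [Gam_eq_inv_Hscale, Gam_eq_inv_Hscale]
  exact inv_anti₀ (Hscale_pos L hw (h.trans_le (sum_le_sum fun k _ => hzw k)))
    (csSup_le_csSup (bddAbove_feasibleScales L hz h) ⟨0, zero_mem_feasibleScales L w⟩ hsub)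

lemma one_sub_mul_mem_feasibleScales_add (hz : ∀ k, 0 ≤ z k) (hδ : ∀ k, 0 ≤ δ k) {ε : ℝ}
    (hε₀ : 0 ≤ ε) (hε₁ : ε ≤ 1) (hεδ : L.deriv 0 * ∑ k, δ k ≤ L.deriv 1 * ε * ∑ k, z k)
    {H : ℝ} (hH : H ∈ feasibleScales L z) : (1 - ε) * H ∈ feasibleScales L (z + δ) := by
  refine ⟨mul_nonneg (sub_nonneg.2 hε₁) hH.1, ?_⟩
  calc ∑ k, L.toFun ((1 - ε) * H * (z + δ) k)
      = ∑ k, L.toFun ((1 - ε) * (H * z k + H * δ k)) := by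
        simp only [Pi.add_apply, mul_add, mul_assoc]
    _ ≤ ∑ k, (L.toFun (H * z k) - L.deriv 1 * ε * (H * z k) + L.deriv 0 * (H * δ k)) :=
        sum_le_sum fun k _ => L.apply_one_sub_mul_add_le (mul_nonneg hH.1 (hz k))
          (mul_le_one_of_mem_feasibleScales L hz hH k) (mul_nonneg hH.1 (hδ k)) hε₀ hε₁
    _ = ∑ k, L.toFun (H * z k) -
          H * (L.deriv 1 * ε * ∑ k, z k - L.deriv 0 * ∑ k, δ k) := by
        simp only [sum_add_distrib, sum_sub_distrib, ← mul_sum]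
        ring
    _ ≤ 1 := (sub_le_self _ (mul_nonneg hH.1 (sub_nonneg.2 hεδ))).trans hH.2

lemma Gam_add_le_of_two_mul_lt (hz : ∀ k, 0 ≤ z k) (hδ : ∀ k, 0 ≤ δ k)
    (hsmall : 2 * L.deriv 0 * ∑ k, δ k < L.deriv 1 * ∑ k, z k) :
    Gam L (z + δ) ≤ Gam L z + 2 * L.deriv 0 ^ 2 / L.deriv 1 * ∑ k, δ k := by
  set n := ∑ k, z k
  set m := ∑ k, δ k
  have hℓ₀ := L.deriv_zero_pos
  have hℓ₁ := L.deriv_one_pos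
  have hm : 0 ≤ m := sum_nonneg fun k _ => hδ k
  have hn : 0 < n :=
    pos_of_mul_pos_right ((by positivity : 0 ≤ 2 * L.deriv 0 * m).trans_lt hsmall) hℓ₁.le
  set ε := L.deriv 0 * m / (L.deriv 1 * n)
  have hε₀ : 0 ≤ ε := by positivity
  have hε₂ : ε ≤ 1 / 2 := by
    rw [div_le_iff₀ (by positivity)]
    linarith
  have hεδ : L.deriv 0 * m = L.deriv 1 * ε * n := by
    simp only [ε]
    field_simp
  have hscale : (1 - ε) * Hscale L z ≤ Hscale L (z + δ) := by
    have hzδ : ∀ k, 0 ≤ (z + δ) k := fun k => add_nonneg (hz k) (hδ k)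
    rw [Hscale_eq_sSup_feasibleScales, Hscale_eq_sSup_feasibleScales, ← smul_eq_mul,
      ← Real.sSup_smul_of_nonneg (by linarith)]
    refine csSup_le_csSup (bddAbove_feasibleScales L hzδ ?_)
      ⟨_, Set.smul_mem_smul_set (zero_mem_feasibleScales L z)⟩ ?_
    · rw [Pi.add_def, sum_add_distrib]
      linarith
    · rintro _ ⟨H, hH, rfl⟩
      exact one_sub_mul_mem_feasibleScales_add L hz hδ hε₀ (by linarith) hεδ.le hH
  have hGam := Gam_le_deriv_zero_mul_sum L hz
  calc Gam L (z + δ) = (Hscale L (z + δ))⁻¹ := Gam_eq_inv_Hscale L _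
    _ ≤ ((1 - ε) * Hscale L z)⁻¹ :=
        inv_anti₀ (mul_pos (by linarith) (Hscale_pos L hz hn)) hscale
    _ = Gam L z / (1 - ε) := by rw [Gam_eq_inv_Hscale, mul_inv, div_eq_mul_inv, mul_comm]
    _ ≤ Gam L z * (1 + 2 * ε) := by
        rw [div_le_iff₀ (by linarith)]
        nlinarith [Gam_nonneg L z, mul_nonneg hε₀ (by linarith : 0 ≤ 1 - 2 * ε)]
    _ ≤ Gam L z + 2 * ε * (L.deriv 0 * n) := by nlinarith
    _ = Gam L z + 2 * L.deriv 0 ^ 2 / L.deriv 1 * m := by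
        simp only [ε]
        field_simp

lemma Gam_add_le_of_le_two_mul (hz : ∀ k, 0 ≤ z k) (hδ : ∀ k, 0 ≤ δ k)
    (hlarge : L.deriv 1 * ∑ k, z k ≤ 2 * L.deriv 0 * ∑ k, δ k) :
    Gam L (z + δ) ≤
      Gam L z + (L.deriv 0 + 2 * L.deriv 0 * (L.deriv 0 - 1) / L.deriv 1) * ∑ k, δ k := by
  set n := ∑ k, z k
  set m := ∑ k, δ k
  have hℓ₁ := L.deriv_one_pos
  have hn : (L.deriv 0 - 1) * n ≤ 2 * L.deriv 0 * (L.deriv 0 - 1) / L.deriv 1 * m := by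
    rw [div_mul_eq_mul_div, le_div_iff₀ hℓ₁]
    nlinarith [L.one_le_deriv_zero]
  calc Gam L (z + δ) ≤ L.deriv 0 * (n + m) :=
        (Gam_le_deriv_zero_mul_sum L fun k => add_nonneg (hz k) (hδ k)).trans_eq
          (by simp only [sum_add_distrib, n, m])
    _ = n + (L.deriv 0 - 1) * n + L.deriv 0 * m := by ring
    _ ≤ Gam L z + 2 * L.deriv 0 * (L.deriv 0 - 1) / L.deriv 1 * m + L.deriv 0 * m := by
        gcongr
        exact sum_le_Gam L hz
    _ = _ := by ring

lemma LGam_pos : 0 < LGam L := by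
  have := L.deriv_zero_pos
  have := L.deriv_one_pos
  unfold LGam
  positivity

lemma Gam_add_le (hz : ∀ k, 0 ≤ z k) (hδ : ∀ k, 0 ≤ δ k) :
    Gam L (z + δ) ≤ Gam L z + LGam L * ∑ k, δ k := by
  have hm : 0 ≤ ∑ k, δ k := sum_nonneg fun k _ => hδ k
  have hℓ₀ := L.one_le_deriv_zero
  have hℓ₁ := L.deriv_one_pos
  rcases lt_or_ge (2 * L.deriv 0 * ∑ k, δ k) (L.deriv 1 * ∑ k, z k) with h | h
  · have hconst : 2 * L.deriv 0 ^ 2 / L.deriv 1 ≤ LGam L := by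
      have : 2 * L.deriv 0 ^ 2 ≤ 2 * L.deriv 0 ^ 3 := by nlinarith
      rw [LGam]
      linarith [div_le_div_of_nonneg_right this hℓ₁.le]
    exact (Gam_add_le_of_two_mul_lt L hz hδ h).trans (by gcongr)
  · have hconst : L.deriv 0 + 2 * L.deriv 0 * (L.deriv 0 - 1) / L.deriv 1 ≤ LGam L := by
      have : 2 * L.deriv 0 * (L.deriv 0 - 1) ≤ 2 * L.deriv 0 ^ 3 := by
        nlinarith [mul_le_mul_of_nonneg_left hℓ₀ (sq_nonneg (L.deriv 0))]
      rw [LGam]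
      linarith [div_le_div_of_nonneg_right this hℓ₁.le]
    exact (Gam_add_le_of_le_two_mul L hz hδ h).trans (by gcongr)

lemma Gam_le_add_LGam_mul_sum_abs_sub (hz : ∀ k, 0 ≤ z k) (hw : ∀ k, 0 ≤ w k) :
    Gam L w ≤ Gam L z + LGam L * ∑ k, |w k - z k| := by
  set δ : Fin K → ℝ := fun k => max (w k - z k) 0
  have hδ : ∀ k, 0 ≤ δ k := fun k => le_max_right _ _
  have hLGam := (LGam_pos L).le
  calc Gam L w ≤ Gam L (z + δ) :=
        Gam_mono L hw fun k => by
          simp only [Pi.add_apply, δ]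
          linarith [le_max_left (w k - z k) 0]
    _ ≤ Gam L z + LGam L * ∑ k, δ k := Gam_add_le L hz hδ
    _ ≤ Gam L z + LGam L * ∑ k, |w k - z k| := by
        gcongr with k
        exact max_le (le_abs_self _) (abs_nonneg _)

end Gam

section Simplex

variable {K : ℕ} {x q : Fin K → ℝ}

lemma le_one_of_mem_simplex (hx : x ∈ simplex K) (k : Fin K) : x k ≤ 1 :=
  hx.2 ▸ single_le_sum (fun j _ => hx.1 j) (mem_univ k)

lemma mul_one_sub_nonneg_of_mem_simplex (hx : x ∈ simplex K) (k : Fin K) :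
    0 ≤ x k * (1 - x k) :=
  mul_nonneg (hx.1 k) (sub_nonneg.2 (le_one_of_mem_simplex hx k))

lemma Cov_eq_one_sub_of_mem_simplex (hx : x ∈ simplex K) (hq : q ∈ simplex K) :
    Cov x q = 1 - (∑ k, |x k - q k|) / 2 := by
  have hmin (a b : ℝ) : min a b = (a + b - |a - b|) / 2 := by
    linarith [min_add_max a b, max_sub_min_eq_abs' a b]
  simp only [Cov, hmin, ← sum_div, sum_sub_distrib, sum_add_distrib, hx.2, hq.2]
  ring

lemma Cov_self_of_mem_simplex (hq : q ∈ simplex K) : Cov q q = 1 := by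
  simp only [Cov, min_self, hq.2]

lemma sum_abs_mul_one_sub_sub_le (hx : x ∈ simplex K) (hq : q ∈ simplex K) :
    ∑ k, |q k * (1 - q k) - x k * (1 - x k)| ≤ ∑ k, |x k - q k| := by
  refine sum_le_sum fun k _ => ?_
  have hx₁ := le_one_of_mem_simplex hx k
  have hq₁ := le_one_of_mem_simplex hq k
  rw [show q k * (1 - q k) - x k * (1 - x k) = (x k - q k) * (x k + q k - 1) by ring, abs_mul]
  exact mul_le_of_le_one_right (abs_nonneg _)
    (abs_le.2 ⟨by linarith [hx.1 k, hq.1 k], by linarith⟩)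

end Simplex

/-- Productive optimum: if θ < 1/(2 L_Γ), then x = q uniquely maximizes the
reduced-form output Y(x) = V·C(x,q)/(1 + θ·Γ(x⊙(1-x))) over the simplex. -/
theorem reduced_form_output_unique_max {K : ℕ} (L : LearningFunction)
    (V θ : ℝ) (hV : 0 < V) (hθ : 0 < θ)
    (q : Fin K → ℝ) (hq : q ∈ simplex K)
    (hθ' : θ < 1 / (2 * LGam L)) :
    ∀ x ∈ simplex K,
      V * Cov x q / (1 + θ * Gam L (fun k => x k * (1 - x k))) ≤
        V * Cov q q / (1 + θ * Gam L (fun k => q k * (1 - q k))) ∧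
      (x ≠ q →
        V * Cov x q / (1 + θ * Gam L (fun k => x k * (1 - x k))) <
          V * Cov q q / (1 + θ * Gam L (fun k => q k * (1 - q k)))) := by
  intro x hx
  set d := ∑ k, |x k - q k|
  set A := Gam L (fun k => x k * (1 - x k))
  set B := Gam L (fun k => q k * (1 - q k))
  have hA : 0 ≤ A := Gam_nonneg L _
  have hB : 0 ≤ B := Gam_nonneg L _
  have hd : 0 ≤ d := sum_nonneg fun k _ => abs_nonneg _
  have hBA : B ≤ A + LGam L * d :=
    (Gam_le_add_LGam_mul_sum_abs_sub L (mul_one_sub_nonneg_of_mem_simplex hx)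
      (mul_one_sub_nonneg_of_mem_simplex hq)).trans
      (by gcongr; exacts [(LGam_pos L).le, sum_abs_mul_one_sub_sub_le hx hq])
  have hθL : θ * (2 * LGam L) < 1 := by
    rwa [← lt_div_iff₀ (by linarith [LGam_pos L])]
  have hgap : Cov x q * (1 + θ * B) + (1 - θ * (2 * LGam L)) * d / 2 ≤ 1 + θ * A := by
    rw [Cov_eq_one_sub_of_mem_simplex hx hq]
    nlinarith [mul_nonneg (mul_nonneg hθ.le hB) hd, mul_le_mul_of_nonneg_left hBA hθ.le]
  have hxA : 0 < 1 + θ * A := by positivity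
  have hqB : 0 < 1 + θ * B := by positivity
  rw [Cov_self_of_mem_simplex hq, mul_one]
  refine ⟨?_, fun hne => ?_⟩
  · rw [div_le_div_iff₀ hxA hqB, mul_assoc]
    exact mul_le_mul_of_nonneg_left (by nlinarith) hV.le
  · obtain ⟨k, hk⟩ := Function.ne_iff.1 hne
    have hd_pos : 0 < d := sum_pos' (fun j _ => abs_nonneg _)
      ⟨k, mem_univ k, abs_pos.2 (sub_ne_zero.2 hk)⟩
    rw [div_lt_div_iff₀ hxA hqB, mul_assoc]
    exact mul_lt_mul_of_pos_left (by nlinarith) hV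

end
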